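/- For the Whittle–Matérn autocorrelation: with γ_Y(0) = (2λ)^{1−2ν}Γ(2ν−1) and ρ_Y(h) = (2^{3/2−ν}/Γ(ν−1/2))·|λh|^{ν−1/2}·K_{ν−1/2}(|λh|), the structure function S₂(Δ) = 2γ_Y(0)(1 − ρ_Y(Δ)) satisfies, for 1/2 < ν < 3/2: S₂(Δ)/(2γ_Y(0)) = 2^{1−2ν}·(Γ(3/2−ν)/Γ(ν+1/2))·(λΔ)^{2ν−1} + O(Δ²) as Δ → 0+. -/

import Mathlib

open Filter Set MeasureTheory

/-- Modified Bessel function of the second kind `K_μ(x)` (for `x > 0`),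
via the integral representation `K_μ(x) = ∫_0^∞ exp(-x cosh t) cosh(μ t) dt`. -/
noncomputable def besselK (μ x : ℝ) : ℝ :=
  ∫ t in Set.Ioi (0 : ℝ), Real.exp (-x * Real.cosh t) * Real.cosh (μ * t)

/-!
Substituting `u = eᵗ`, folding `(1, ∞)` onto `(0, 1)` by `u ↦ 1/u` and rescaling `u = 2s/x` gives
`2^(1-μ) x^μ K_μ(x) = ∫₀^∞ e^(-s) s^(μ-1) e^(-y/s) ds` with `y = x²/4`. Writing
`e^(-s) e^(-y/s) = e^(-s) + (e^(-y/s) - 1) + (e^(-s) - 1)(e^(-y/s) - 1)` splits this integral into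
`Γ(μ)`, `Γ(-μ) y^μ` (after `s ↦ y/s` and an integration by parts) and a remainder which is `O(y)`
because `|e^(-t) - 1| ≤ min 1 t`. Taking `μ = ν - 1/2` and `x = λΔ` gives the expansion, since
`Γ(3/2 - ν) / Γ(ν + 1/2) = -Γ(-μ) / Γ(μ)`.
-/

open Real Topology

theorem abs_exp_neg_sub_one_le_one {t : ℝ} (ht : 0 ≤ t) : |exp (-t) - 1| ≤ 1 := by
  rw [abs_sub_comm, abs_of_nonneg (sub_nonneg.mpr (exp_le_one_iff.mpr (by linarith)))]
  linarith [exp_pos (-t)]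

theorem abs_exp_neg_sub_one_le_self {t : ℝ} (ht : 0 ≤ t) : |exp (-t) - 1| ≤ t := by
  rw [abs_sub_comm, abs_of_nonneg (sub_nonneg.mpr (exp_le_one_iff.mpr (by linarith)))]
  linarith [one_sub_le_exp_neg t]

theorem integral_Ioc_zero_one_rpow {a : ℝ} (ha : -1 < a) :
    ∫ s in Ioc (0 : ℝ) 1, s ^ a = 1 / (a + 1) := by
  rw [← intervalIntegral.integral_of_le zero_le_one, integral_rpow (Or.inl ha), one_rpow,
    zero_rpow (by linarith)]
  ring

theorem integrableOn_Ioi_of_abs_le_rpow {f : ℝ → ℝ} {a b C₀ C₁ : ℝ} (ha : -1 < a) (hb : b < -1)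
    (hf : AEStronglyMeasurable f (volume.restrict (Ioi 0)))
    (h₀ : ∀ s ∈ Ioc (0 : ℝ) 1, |f s| ≤ C₀ * s ^ a) (h₁ : ∀ s ∈ Ioi (1 : ℝ), |f s| ≤ C₁ * s ^ b) :
    IntegrableOn f (Ioi 0) := by
  rw [← Ioc_union_Ioi_eq_Ioi zero_le_one]
  refine IntegrableOn.union ?_ ?_
  · exact ((intervalIntegral.intervalIntegrable_rpow' ha).1.const_mul C₀).mono'
      (hf.mono_measure (Measure.restrict_mono Ioc_subset_Ioi_self le_rfl))
      (ae_restrict_of_forall_mem measurableSet_Ioc h₀)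
  · exact ((integrableOn_Ioi_rpow_of_lt hb one_pos).const_mul C₁).mono'
      (hf.mono_measure (Measure.restrict_mono (Ioi_subset_Ioi zero_le_one) le_rfl))
      (ae_restrict_of_forall_mem measurableSet_Ioi h₁)

theorem abs_integral_Ioi_le_of_abs_le_rpow {f : ℝ → ℝ} {a b C₀ C₁ : ℝ} (ha : -1 < a) (hb : b < -1)
    (hf : AEStronglyMeasurable f (volume.restrict (Ioi 0)))
    (h₀ : ∀ s ∈ Ioc (0 : ℝ) 1, |f s| ≤ C₀ * s ^ a) (h₁ : ∀ s ∈ Ioi (1 : ℝ), |f s| ≤ C₁ * s ^ b) :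
    |∫ s in Ioi 0, f s| ≤ C₀ / (a + 1) - C₁ / (b + 1) := by
  have hint := integrableOn_Ioi_of_abs_le_rpow ha hb hf h₀ h₁
  rw [← Ioc_union_Ioi_eq_Ioi zero_le_one, setIntegral_union (Ioc_disjoint_Ioi le_rfl)
    measurableSet_Ioi (hint.mono_set Ioc_subset_Ioi_self)
    (hint.mono_set (Ioi_subset_Ioi zero_le_one))]
  calc |(∫ s in Ioc 0 1, f s) + ∫ s in Ioi 1, f s|
      ≤ |∫ s in Ioc 0 1, f s| + |∫ s in Ioi 1, f s| := abs_add_le _ _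
    _ ≤ (∫ s in Ioc 0 1, C₀ * s ^ a) + ∫ s in Ioi 1, C₁ * s ^ b :=
        add_le_add
          (norm_integral_le_of_norm_le (f := f)
            ((intervalIntegral.intervalIntegrable_rpow' ha).1.const_mul C₀)
            (ae_restrict_of_forall_mem measurableSet_Ioc h₀))
          (norm_integral_le_of_norm_le (f := f)
            ((integrableOn_Ioi_rpow_of_lt hb one_pos).const_mul C₁)
            (ae_restrict_of_forall_mem measurableSet_Ioi h₁))
    _ = C₀ / (a + 1) - C₁ / (b + 1) := by
        rw [integral_const_mul, integral_const_mul, integral_Ioc_zero_one_rpow ha,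
          integral_Ioi_rpow_of_lt hb one_pos, one_rpow]
        ring

theorem integrableOn_exp_neg_sub_one_mul_rpow {s : ℝ} (hs₀ : -1 < s) (hs₁ : s < 0) :
    IntegrableOn (fun w ↦ (exp (-w) - 1) * w ^ (s - 1)) (Ioi 0) := by
  refine integrableOn_Ioi_of_abs_le_rpow (C₀ := 1) (C₁ := 1) hs₀ (by linarith : s - 1 < -1)
    (by fun_prop) (fun w ⟨hw, _⟩ ↦ ?_) (fun w hw ↦ ?_)
  · rw [abs_mul, abs_of_nonneg (rpow_nonneg hw.le _), one_mul]
    calc |exp (-w) - 1| * w ^ (s - 1) ≤ w * w ^ (s - 1) := by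
          gcongr; exact abs_exp_neg_sub_one_le_self hw.le
      _ = w ^ s := by rw [rpow_sub_one hw.ne']; field_simp
  · have hw : (0 : ℝ) < w := one_pos.trans hw
    rw [abs_mul, abs_of_nonneg (rpow_nonneg hw.le _), one_mul]
    exact mul_le_of_le_one_left (rpow_nonneg hw.le _) (abs_exp_neg_sub_one_le_one hw.le)

theorem tendsto_exp_neg_sub_one_mul_rpow_nhdsGT_zero {s : ℝ} (hs : -1 < s) :
    Tendsto (fun w ↦ (exp (-w) - 1) * w ^ s) (𝓝[>] 0) (𝓝 0) := by
  have hlim : Tendsto (fun w : ℝ ↦ w ^ (s + 1)) (𝓝[>] 0) (𝓝 0) := by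
    have := (continuousAt_rpow_const 0 (s + 1) (Or.inr (by linarith))).tendsto.mono_left
      (nhdsWithin_le_nhds (s := Ioi 0))
    rwa [zero_rpow (by linarith)] at this
  refine squeeze_zero_norm' ?_ hlim
  filter_upwards [self_mem_nhdsWithin] with w (hw : 0 < w)
  rw [norm_mul, Real.norm_eq_abs, Real.norm_eq_abs, abs_of_nonneg (rpow_nonneg hw.le _)]
  calc |exp (-w) - 1| * w ^ s ≤ w * w ^ s := by
        gcongr; exact abs_exp_neg_sub_one_le_self hw.le
    _ = w ^ (s + 1) := by rw [rpow_add_one hw.ne']; ring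

theorem integral_exp_neg_sub_one_mul_rpow {s : ℝ} (hs₀ : -1 < s) (hs₁ : s < 0) :
    ∫ w in Ioi 0, (exp (-w) - 1) * w ^ (s - 1) = Gamma s := by
  -- integrate by parts against `v = w ^ s / s`, turning the integral into `Γ(s + 1) / s`
  have hs : s ≠ 0 := hs₁.ne
  have hu : ∀ w ∈ Ioi (0 : ℝ), HasDerivAt (fun w ↦ exp (-w) - 1) (-exp (-w)) w := fun w _ ↦ by
    simpa using ((hasDerivAt_neg w).exp).sub_const 1
  have hv : ∀ w ∈ Ioi (0 : ℝ), HasDerivAt (fun w ↦ w ^ s / s) (w ^ (s - 1)) w := fun w hw ↦ by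
    simpa [mul_div_cancel_left₀ _ hs] using
      (hasDerivAt_rpow_const (p := s) (Or.inl (ne_of_gt hw))).div_const s
  have hu'v : IntegrableOn (fun w ↦ -exp (-w) * (w ^ s / s)) (Ioi 0) := by
    refine IntegrableOn.congr_fun
      ((GammaIntegral_convergent (by linarith : 0 < s + 1)).const_mul (-1 / s))
      (fun w _ ↦ ?_) measurableSet_Ioi
    simp only [add_sub_cancel_right]
    ring
  have h_zero : Tendsto (fun w ↦ (exp (-w) - 1) * (w ^ s / s)) (𝓝[>] 0) (𝓝 0) := by
    simpa [mul_div_assoc] using (tendsto_exp_neg_sub_one_mul_rpow_nhdsGT_zero hs₀).div_const s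
  have h_infty : Tendsto (fun w ↦ (exp (-w) - 1) * (w ^ s / s)) atTop (𝓝 0) := by
    have hexp : Tendsto (fun w : ℝ ↦ exp (-w) - 1) atTop (𝓝 (0 - 1)) :=
      (tendsto_exp_atBot.comp tendsto_neg_atTop_atBot).sub_const 1
    have hpow : Tendsto (fun w : ℝ ↦ w ^ s / s) atTop (𝓝 (0 / s)) := by
      simpa using (tendsto_rpow_neg_atTop (y := -s) (by linarith)).div_const s
    simpa using hexp.mul hpow
  have hΓ : ∫ w in Ioi 0, -exp (-w) * (w ^ s / s) = -(1 / s) * Gamma (s + 1) := by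
    rw [Gamma_eq_integral (by linarith), ← integral_const_mul]
    refine setIntegral_congr_fun measurableSet_Ioi (fun w _ ↦ ?_)
    simp only [add_sub_cancel_right]
    ring
  rw [integral_Ioi_mul_deriv_eq_deriv_mul hu hv (integrableOn_exp_neg_sub_one_mul_rpow hs₀ hs₁)
    hu'v h_zero h_infty, hΓ, Gamma_add_one hs]
  field_simp
  ring

theorem integral_exp_neg_div_sub_one_mul_rpow {μ y : ℝ} (hμ₀ : 0 < μ) (hμ₁ : μ < 1) (hy : 0 < y) :
    ∫ s in Ioi 0, (exp (-(y / s)) - 1) * s ^ (μ - 1) = Gamma (-μ) * y ^ μ := by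
  have hsubst : EqOn
      (fun x ↦ (|(-1 : ℝ)| * x ^ ((-1 : ℝ) - 1)) • ((exp (-(y / x ^ (-1 : ℝ))) - 1) *
        (x ^ (-1 : ℝ)) ^ (μ - 1)))
      (fun x ↦ y ^ (μ + 1) * ((exp (-(y * x)) - 1) * (y * x) ^ (-μ - 1))) (Ioi 0) := by
    intro x (hx : 0 < x)
    have hx' : x ^ ((-1 : ℝ) - 1) * (x ^ (-1 : ℝ)) ^ (μ - 1) = x ^ (-μ - 1) := by
      rw [← rpow_mul hx.le, ← rpow_add hx]; ring_nf
    have hy' : y ^ (μ + 1) * y ^ (-μ - 1) = 1 := by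
      rw [← rpow_add hy]; ring_nf; exact rpow_zero y
    simp only [smul_eq_mul, abs_neg, abs_one, one_mul, mul_rpow hy.le hx.le]
    rw [rpow_neg_one x, div_inv_eq_mul, ← rpow_neg_one x]
    linear_combination (exp (-(y * x)) - 1) * hx' - (exp (-(y * x)) - 1) * x ^ (-μ - 1) * hy'
  rw [← integral_comp_rpow_Ioi _ (by norm_num : (-1 : ℝ) ≠ 0),
    setIntegral_congr_fun measurableSet_Ioi hsubst, integral_const_mul,
    integral_comp_mul_left_Ioi (fun w ↦ (exp (-w) - 1) * w ^ (-μ - 1)) 0 hy, mul_zero,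
    integral_exp_neg_sub_one_mul_rpow (by linarith) (by linarith), smul_eq_mul,
    rpow_add_one hy.ne']
  field_simp

theorem abs_exp_neg_div_sub_one_mul_rpow_le {μ y s : ℝ} (hy : 0 ≤ y) (hs : 0 < s) :
    |exp (-(y / s)) - 1| * s ^ (μ - 1) ≤ y * s ^ (μ - 2) :=
  calc |exp (-(y / s)) - 1| * s ^ (μ - 1) ≤ y / s * s ^ (μ - 1) := by
        gcongr; exact abs_exp_neg_sub_one_le_self (by positivity)
    _ = y * s ^ (μ - 2) := by
        rw [show μ - 2 = μ - 1 - 1 by ring, rpow_sub_one hs.ne' (μ - 1)]; ring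

theorem integrableOn_exp_neg_div_sub_one_mul_rpow {μ y : ℝ} (hμ₀ : 0 < μ) (hμ₁ : μ < 1)
    (hy : 0 ≤ y) : IntegrableOn (fun s ↦ (exp (-(y / s)) - 1) * s ^ (μ - 1)) (Ioi 0) := by
  refine integrableOn_Ioi_of_abs_le_rpow (C₀ := 1) (C₁ := y) (a := μ - 1) (b := μ - 2)
    (by linarith) (by linarith) (by fun_prop) (fun s ⟨hs, _⟩ ↦ ?_) (fun s hs ↦ ?_)
  · rw [abs_mul, abs_of_nonneg (rpow_nonneg hs.le _), one_mul]
    exact mul_le_of_le_one_left (rpow_nonneg hs.le _)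
      (abs_exp_neg_sub_one_le_one (by positivity))
  · have hs : (0 : ℝ) < s := one_pos.trans hs
    rw [abs_mul, abs_of_nonneg (rpow_nonneg hs.le _)]
    exact abs_exp_neg_div_sub_one_mul_rpow_le hy hs

theorem abs_integral_exp_neg_mul_rpow_mul_exp_neg_div_sub_le {μ y : ℝ} (hμ₀ : 0 < μ)
    (hμ₁ : μ < 1) (hy : 0 < y) :
    |(∫ s in Ioi 0, exp (-s) * s ^ (μ - 1) * exp (-(y / s))) - Gamma μ - Gamma (-μ) * y ^ μ|
      ≤ (1 / μ + 1 / (1 - μ)) * y := by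
  set f₃ : ℝ → ℝ := fun s ↦ (exp (-s) - 1) * (exp (-(y / s)) - 1) * s ^ (μ - 1)
  have hf₃₀ : ∀ s ∈ Ioc (0 : ℝ) 1, |f₃ s| ≤ y * s ^ (μ - 1) := by
    rintro s ⟨hs, -⟩
    rw [abs_mul, abs_mul, abs_of_nonneg (rpow_nonneg hs.le _)]
    calc |exp (-s) - 1| * |exp (-(y / s)) - 1| * s ^ (μ - 1) ≤ s * (y / s) * s ^ (μ - 1) := by
          gcongr
          · exact abs_exp_neg_sub_one_le_self hs.le
          · exact abs_exp_neg_sub_one_le_self (by positivity)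
      _ = y * s ^ (μ - 1) := by rw [mul_div_cancel₀ _ hs.ne']
  have hf₃₁ : ∀ s ∈ Ioi (1 : ℝ), |f₃ s| ≤ y * s ^ (μ - 2) := by
    intro s hs
    have hs : (0 : ℝ) < s := one_pos.trans hs
    rw [abs_mul, abs_mul, abs_of_nonneg (rpow_nonneg hs.le _), mul_assoc]
    calc |exp (-s) - 1| * (|exp (-(y / s)) - 1| * s ^ (μ - 1))
        ≤ 1 * (|exp (-(y / s)) - 1| * s ^ (μ - 1)) := by
          gcongr; exact abs_exp_neg_sub_one_le_one hs.le
      _ ≤ y * s ^ (μ - 2) := by rw [one_mul]; exact abs_exp_neg_div_sub_one_mul_rpow_le hy.le hs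
  have hf₃meas : AEStronglyMeasurable f₃ (volume.restrict (Ioi 0)) := by fun_prop
  have hsplit : ∫ s in Ioi 0, exp (-s) * s ^ (μ - 1) * exp (-(y / s))
      = Gamma μ + Gamma (-μ) * y ^ μ + ∫ s in Ioi 0, f₃ s := by
    have hf₂ := integrableOn_exp_neg_div_sub_one_mul_rpow hμ₀ hμ₁ hy.le
    have hf₁₂ : IntegrableOn
        (fun s ↦ exp (-s) * s ^ (μ - 1) + (exp (-(y / s)) - 1) * s ^ (μ - 1)) (Ioi 0) :=
      (GammaIntegral_convergent hμ₀).add hf₂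
    rw [Gamma_eq_integral hμ₀, ← integral_exp_neg_div_sub_one_mul_rpow hμ₀ hμ₁ hy,
      ← integral_add (GammaIntegral_convergent hμ₀) hf₂, ← integral_add hf₁₂
        (integrableOn_Ioi_of_abs_le_rpow (by linarith) (by linarith) hf₃meas hf₃₀ hf₃₁)]
    refine setIntegral_congr_fun measurableSet_Ioi (fun s _ ↦ ?_)
    simp only [f₃]
    ring
  rw [hsplit, show ∀ a b c : ℝ, a + b + c - a - b = c by intros; ring]
  calc |∫ s in Ioi 0, f₃ s| ≤ y / (μ - 1 + 1) - y / (μ - 2 + 1) :=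
        abs_integral_Ioi_le_of_abs_le_rpow (by linarith) (by linarith) hf₃meas hf₃₀ hf₃₁
    _ = (1 / μ + 1 / (1 - μ)) * y := by
        rw [show μ - 2 + 1 = -(1 - μ) by ring, sub_add_cancel, div_neg]; ring

theorem besselK_eq_integral_Ioi_one (μ x : ℝ) :
    besselK μ x = ∫ u in Ioi 1, exp (-(x * (u + u⁻¹) / 2)) * (u ^ (μ - 1) + u ^ (-μ - 1)) / 2 := by
  have hsubst := integral_comp_exp_Ioi
    (fun u ↦ exp (-(x * (u + u⁻¹) / 2)) * (u ^ (μ - 1) + u ^ (-μ - 1)) / 2) 0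
  rw [exp_zero] at hsubst
  rw [← hsubst, besselK]
  refine setIntegral_congr_fun measurableSet_Ioi (fun t _ ↦ ?_)
  have h₁ : exp t * (exp t) ^ (μ - 1) = exp (μ * t) := by rw [← exp_mul, ← exp_add]; ring_nf
  have h₂ : exp t * (exp t) ^ (-μ - 1) = exp (-(μ * t)) := by rw [← exp_mul, ← exp_add]; ring_nf
  rw [smul_eq_mul, ← exp_neg, cosh_eq, cosh_eq]
  rw [show -x * ((exp t + exp (-t)) / 2) = -(x * (exp t + exp (-t)) / 2) by ring]
  linear_combination -exp (-(x * (exp t + exp (-t)) / 2)) / 2 * (h₁ + h₂)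

theorem integral_Ioi_one_add_inv_sq_mul_comp_inv {g : ℝ → ℝ} (hg : IntegrableOn g (Ioi 0)) :
    ∫ u in Ioi 1, (g u + (u ^ 2)⁻¹ * g u⁻¹) = ∫ u in Ioi 0, g u := by
  have himage : Inv.inv '' Ioi (1 : ℝ) = Ioo 0 1 := by
    rw [image_inv_eq_inv, inv_Ioi₀ one_pos, inv_one]
  have hderiv : ∀ u ∈ Ioi (1 : ℝ), HasDerivWithinAt Inv.inv (-(u ^ 2)⁻¹) (Ioi 1) u :=
    fun u hu ↦ (hasDerivAt_inv (one_pos.trans hu).ne').hasDerivWithinAt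
  have hsubst := integral_image_eq_integral_abs_deriv_smul measurableSet_Ioi hderiv
    inv_injective.injOn g
  have hint := integrableOn_image_iff_integrableOn_abs_deriv_smul measurableSet_Ioi hderiv
    inv_injective.injOn g
  simp only [himage, abs_neg, abs_inv, abs_pow, sq_abs, smul_eq_mul] at hsubst hint
  rw [integral_add (hg.mono_set (Ioi_subset_Ioi zero_le_one))
      (hint.mp (hg.mono_set Ioo_subset_Ioi_self)), ← hsubst, ← integral_Ioc_eq_integral_Ioo,
    add_comm, ← setIntegral_union (Ioc_disjoint_Ioi le_rfl) measurableSet_Ioi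
      (hg.mono_set Ioc_subset_Ioi_self) (hg.mono_set (Ioi_subset_Ioi zero_le_one)),
    Ioc_union_Ioi_eq_Ioi zero_le_one]

theorem besselK_eq_integral_Ioi_zero {μ x : ℝ} (hμ : 0 < μ) (hx : 0 < x) :
    besselK μ x = ∫ u in Ioi 0, exp (-(x * (u + u⁻¹) / 2)) * u ^ (μ - 1) / 2 := by
  have hg : IntegrableOn (fun u ↦ exp (-(x * (u + u⁻¹) / 2)) * u ^ (μ - 1) / 2) (Ioi 0) := by
    refine (integrableOn_rpow_mul_exp_neg_mul_rpow (by linarith : -1 < μ - 1) one_pos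
      (half_pos hx)).mono' (by fun_prop) (ae_restrict_of_forall_mem measurableSet_Ioi ?_)
    intro u (hu : 0 < u)
    rw [Real.norm_eq_abs, abs_of_nonneg (by positivity), rpow_one]
    have : exp (-(x * (u + u⁻¹) / 2)) ≤ exp (-(x / 2) * u) :=
      exp_le_exp.mpr (by nlinarith [mul_pos hx (inv_pos.mpr hu)])
    nlinarith [rpow_nonneg hu.le (μ - 1), exp_pos (-(x * (u + u⁻¹) / 2))]
  rw [besselK_eq_integral_Ioi_one, ← integral_Ioi_one_add_inv_sq_mul_comp_inv hg]
  refine setIntegral_congr_fun measurableSet_Ioi (fun u (hu : 1 < u) ↦ ?_)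
  have hu : 0 < u := one_pos.trans hu
  have hpow : (u ^ 2)⁻¹ * u⁻¹ ^ (μ - 1) = u ^ (-μ - 1) := by
    rw [inv_rpow hu.le, ← rpow_neg hu.le, ← rpow_natCast, ← rpow_neg hu.le, ← rpow_add hu]
    congr 1; push_cast; ring
  rw [inv_inv, add_comm u⁻¹ u, ← hpow]
  ring

theorem besselK_eq_rpow_mul_integral {μ x : ℝ} (hμ : 0 < μ) (hx : 0 < x) :
    besselK μ x =
      (2 / x) ^ μ / 2 * ∫ s in Ioi 0, exp (-s) * s ^ (μ - 1) * exp (-(x ^ 2 / 4 / s)) := by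
  have h2x : 0 < 2 / x := by positivity
  have hscale := integral_comp_mul_left_Ioi'
    (fun u ↦ exp (-(x * (u + u⁻¹) / 2)) * u ^ (μ - 1) / 2) 0 h2x
  rw [mul_zero] at hscale
  rw [besselK_eq_integral_Ioi_zero hμ hx, ← hscale, smul_eq_mul, ← integral_const_mul,
    ← integral_const_mul]
  refine setIntegral_congr_fun measurableSet_Ioi (fun s (hs : 0 < s) ↦ ?_)
  have hexp : -(x * (2 / x * s + (2 / x * s)⁻¹) / 2) = -s + -(x ^ 2 / 4 / s) := by
    field_simp; ring
  rw [hexp, exp_add, mul_rpow h2x.le hs.le, rpow_sub_one h2x.ne']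
  field_simp

theorem abs_one_sub_rpow_mul_besselK_sub_le {μ x : ℝ} (hμ₀ : 0 < μ) (hμ₁ : μ < 1) (hx : 0 < x) :
    |1 - 2 ^ (1 - μ) / Gamma μ * x ^ μ * besselK μ x -
        2 ^ (-2 * μ) * (Gamma (1 - μ) / Gamma (μ + 1)) * x ^ (2 * μ)|
      ≤ (1 / μ + 1 / (1 - μ)) / (4 * Gamma μ) * x ^ 2 := by
  have hΓ : 0 < Gamma μ := Gamma_pos_of_pos hμ₀
  set I := ∫ s in Ioi 0, exp (-s) * s ^ (μ - 1) * exp (-(x ^ 2 / 4 / s))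
  have hK : 2 ^ (1 - μ) * x ^ μ * besselK μ x = I := by
    have hconst : 2 ^ (1 - μ) * x ^ μ * ((2 / x) ^ μ / 2) = 1 := by
      rw [div_rpow two_pos.le hx.le, rpow_sub two_pos, rpow_one]
      field_simp
    rw [besselK_eq_rpow_mul_integral hμ₀ hx, ← mul_assoc, hconst, one_mul]
  have hpow : 2 ^ (-2 * μ) * x ^ (2 * μ) = (x ^ 2 / 4) ^ μ := by
    rw [div_rpow (by positivity) (by norm_num), show (4 : ℝ) = 2 ^ 2 by norm_num,
      ← rpow_natCast, ← rpow_natCast, ← rpow_mul hx.le, ← rpow_mul two_pos.le, neg_mul,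
      rpow_neg two_pos.le]
    push_cast
    field_simp
  have hΓ' : Gamma (1 - μ) / Gamma (μ + 1) = -Gamma (-μ) / Gamma μ := by
    rw [Gamma_add_one hμ₀.ne', show 1 - μ = -μ + 1 by ring, Gamma_add_one (neg_ne_zero.mpr hμ₀.ne')]
    field_simp
  have hrewrite : 1 - 2 ^ (1 - μ) / Gamma μ * x ^ μ * besselK μ x -
      2 ^ (-2 * μ) * (Gamma (1 - μ) / Gamma (μ + 1)) * x ^ (2 * μ)
      = -((I - Gamma μ - Gamma (-μ) * (x ^ 2 / 4) ^ μ) / Gamma μ) := by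
    rw [← hK, ← hpow, hΓ']
    field_simp
    ring
  rw [hrewrite, abs_neg, abs_div, abs_of_pos hΓ]
  calc |I - Gamma μ - Gamma (-μ) * (x ^ 2 / 4) ^ μ| / Gamma μ
      ≤ (1 / μ + 1 / (1 - μ)) * (x ^ 2 / 4) / Gamma μ := by
        gcongr
        exact abs_integral_exp_neg_mul_rpow_mul_exp_neg_div_sub_le hμ₀ hμ₁ (by positivity)
    _ = (1 / μ + 1 / (1 - μ)) / (4 * Gamma μ) * x ^ 2 := by ring

theorem stmt_13 (lam ν : ℝ) (hlam : 0 < lam) (hν₁ : 1 / 2 < ν) (hν₂ : ν < 3 / 2) :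
    ∃ M δ : ℝ, 0 < M ∧ 0 < δ ∧ ∀ Δ : ℝ, 0 < Δ → Δ < δ →
      |(2 * ((2 * lam) ^ (1 - 2 * ν) * Real.Gamma (2 * ν - 1)) *
            (1 - 2 ^ (3 / 2 - ν) / Real.Gamma (ν - 1 / 2) *
              |lam * Δ| ^ (ν - 1 / 2) * besselK (ν - 1 / 2) |lam * Δ|)) /
          (2 * ((2 * lam) ^ (1 - 2 * ν) * Real.Gamma (2 * ν - 1))) -
        2 ^ (1 - 2 * ν) * (Real.Gamma (3 / 2 - ν) / Real.Gamma (ν + 1 / 2)) *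
          (lam * Δ) ^ (2 * ν - 1)| ≤ M * Δ ^ 2 := by
  have hμ₀ : 0 < ν - 1 / 2 := by linarith
  have hμ₁ : ν - 1 / 2 < 1 := by linarith
  have hγ : 0 < 2 * ((2 * lam) ^ (1 - 2 * ν) * Gamma (2 * ν - 1)) := by
    have := Gamma_pos_of_pos (by linarith : 0 < 2 * ν - 1)
    positivity
  refine ⟨(1 / (ν - 1 / 2) + 1 / (1 - (ν - 1 / 2))) / (4 * Gamma (ν - 1 / 2)) * lam ^ 2, 1,
    by have := sub_pos.mpr hμ₁; positivity, one_pos, fun Δ hΔ _ ↦ ?_⟩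
  have hx : 0 < lam * Δ := mul_pos hlam hΔ
  rw [abs_of_pos hx, mul_div_cancel_left₀ _ hγ.ne', show 3 / 2 - ν = 1 - (ν - 1 / 2) by ring,
    show 1 - 2 * ν = -2 * (ν - 1 / 2) by ring, show ν + 1 / 2 = ν - 1 / 2 + 1 by ring,
    show 2 * ν - 1 = 2 * (ν - 1 / 2) by ring]
  calc _ ≤ _ := abs_one_sub_rpow_mul_besselK_sub_le hμ₀ hμ₁ hx
    _ = _ := by ring
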